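/- Let s ∈ ℝ∖{0} and let π be a Hermitian projection of ℂ^{n+1} satisfying π̄ = I_{1,n} π I_{1,n}⁻¹ and π π̄ = π̄ π = 0. Define φ_{is,π}(λ) = I + (2is/(λ-is))π - (2is/(λ+is))π̄. Then: (a) φ_{is,π}(λ) equals the product (I + (2is/(λ-is)) π̄^⊥)(I - (2is/(λ+is)) π^⊥) where π^⊥ = I - π; (b) φ_{is,π}(λ)⁻¹ = φ_{-is,π}(λ) for all λ ∉ {±is}; (c) φ_{is,π} satisfies the reality conditions φ(λ̄)‾ = φ(λ) and I_{1,n} φ(-λ) I_{1,n}⁻¹ = φ(λ), and φ_{is,π}(∞) = I. -/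
import Mathlib


open scoped BigOperators
open Matrix Filter

/-- `I_{1,n} = diag(1, -Iₙ)` over ℂ, of size `n+1` -/
noncomputable def Jmat (n : ℕ) : Matrix (Fin (n + 1)) (Fin (n + 1)) ℂ :=
  Matrix.diagonal fun i => if i = 0 then 1 else -1

/-- the simple element `φ_{is,π}(λ) = I + (2is/(λ-is))π - (2is/(λ+is))π̄` -/
noncomputable def phi {n : ℕ} (s : ℝ) (p : Matrix (Fin (n + 1)) (Fin (n + 1)) ℂ)
    (lam : ℂ) : Matrix (Fin (n + 1)) (Fin (n + 1)) ℂ :=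
  1 + (2 * Complex.I * s / (lam - Complex.I * s)) • p
    - (2 * Complex.I * s / (lam + Complex.I * s)) • p.map (starRingEnd ℂ)

/-- for `s ∈ ℝ∖{0}` and a Hermitian projection `π` with
`π̄ = I_{1,n} π I_{1,n}⁻¹` and `ππ̄ = π̄π = 0`:
(a) `φ_{is,π}` factors as `(I + (2is/(λ-is))π̄^⊥)(I - (2is/(λ+is))π^⊥)`;
(b) `φ_{is,π}(λ)⁻¹ = φ_{-is,π}(λ)`;
(c) `φ_{is,π}` satisfies the reality conditions and `φ_{is,π}(∞) = I`. -/
theorem stmt9 {n : ℕ} (s : ℝ) (hs : s ≠ 0)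
    (p : Matrix (Fin (n + 1)) (Fin (n + 1)) ℂ)
    (hherm : p.conjTranspose = p) (hproj : p * p = p)
    (hre : p.map (starRingEnd ℂ) = Jmat n * p * (Jmat n)⁻¹)
    (hperp1 : p * p.map (starRingEnd ℂ) = 0)
    (hperp2 : p.map (starRingEnd ℂ) * p = 0) :
    -- (a) product formula
    (∀ lam : ℂ, lam ≠ Complex.I * s → lam ≠ -(Complex.I * s) →
      phi s p lam =
        (1 + (2 * Complex.I * s / (lam - Complex.I * s)) • (1 - p.map (starRingEnd ℂ)))
          * (1 - (2 * Complex.I * s / (lam + Complex.I * s)) • (1 - p))) ∧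
    -- (b) inverse formula
    (∀ lam : ℂ, lam ≠ Complex.I * s → lam ≠ -(Complex.I * s) →
      phi s p lam * phi (-s) p lam = 1 ∧ phi (-s) p lam * phi s p lam = 1) ∧
    -- (c) reality conditions
    (∀ lam : ℂ, lam ≠ Complex.I * s → lam ≠ -(Complex.I * s) →
      (phi s p ((starRingEnd ℂ) lam)).map (starRingEnd ℂ) = phi s p lam ∧
      Jmat n * phi s p (-lam) * (Jmat n)⁻¹ = phi s p lam) ∧
    -- (c) `φ(∞) = I`, entrywise
    (∀ i j, Tendsto (fun lam : ℂ => phi s p lam i j) (cocompact ℂ)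
      (nhds ((1 : Matrix (Fin (n + 1)) (Fin (n + 1)) ℂ) i j))) := by
  set q := p.map (starRingEnd ℂ) with hq
  have hq2 : q * q = q := by rw [hq, ← Matrix.map_mul, hproj]
  refine ⟨?_, ?_, ?_, ?_⟩
  · -- (a)
    intro lam h1 h2
    have hd1 : lam - Complex.I * s ≠ 0 := sub_ne_zero.mpr h1
    have hd2 : lam + Complex.I * s ≠ 0 := by
      rw [← sub_neg_eq_add]; exact sub_ne_zero.mpr h2
    rw [phi, ← hq]
    simp only [add_mul, sub_mul, mul_add, mul_sub, one_mul, mul_one, Matrix.smul_mul,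
      Matrix.mul_smul, smul_smul, smul_sub, hproj, hq2, hperp1, hperp2, smul_zero]
    match_scalars <;> field_simp <;> ring
  · -- (b)
    intro lam h1 h2
    have hd1 : lam - Complex.I * s ≠ 0 := sub_ne_zero.mpr h1
    have hd2 : lam + Complex.I * s ≠ 0 := by
      rw [← sub_neg_eq_add]; exact sub_ne_zero.mpr h2
    have c1' : 2 * Complex.I * ((-s : ℝ) : ℂ) / (lam - Complex.I * ((-s : ℝ) : ℂ))
        = -(2 * Complex.I * s / (lam + Complex.I * s)) := by
      push_cast
      have h : lam - Complex.I * (-(s : ℂ)) = lam + Complex.I * s := by ring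
      rw [h]; ring
    have c2' : 2 * Complex.I * ((-s : ℝ) : ℂ) / (lam + Complex.I * ((-s : ℝ) : ℂ))
        = -(2 * Complex.I * s / (lam - Complex.I * s)) := by
      push_cast
      have h : lam + Complex.I * (-(s : ℂ)) = lam - Complex.I * s := by ring
      rw [h]; ring
    have e1 : phi (-s) p lam = 1 + (-(2 * Complex.I * s / (lam + Complex.I * s))) • p
        - (-(2 * Complex.I * s / (lam - Complex.I * s))) • q := by
      rw [phi, ← hq, c1', c2']
    constructor <;>
    · rw [e1, phi, ← hq]
      simp only [add_mul, sub_mul, mul_add, mul_sub, one_mul, mul_one, Matrix.smul_mul,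
        Matrix.mul_smul, smul_smul, hproj, hq2, hperp1, hperp2, smul_zero]
      match_scalars <;> field_simp <;> ring
  · -- (c)
    intro lam h1 h2
    have hd1 : lam - Complex.I * s ≠ 0 := sub_ne_zero.mpr h1
    have hd2 : lam + Complex.I * s ≠ 0 := by
      rw [← sub_neg_eq_add]; exact sub_ne_zero.mpr h2
    have hd1' : -lam + Complex.I * s ≠ 0 := fun h => hd1 (by linear_combination -h)
    have hd2' : -lam - Complex.I * s ≠ 0 := fun h => hd2 (by linear_combination -h)
    constructor
    · have hsmul : ∀ (c : ℂ) (M : Matrix (Fin (n+1)) (Fin (n+1)) ℂ),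
          (c • M).map (starRingEnd ℂ) = (starRingEnd ℂ c) • M.map (starRingEnd ℂ) := by
        intro c M; ext i j; simp
      have hqq : q.map (starRingEnd ℂ) = p := by
        ext i j; simp [hq]
      rw [phi, ← hq, Matrix.map_sub, Matrix.map_add, hsmul, hsmul, hqq,
        Matrix.map_one _ (map_zero _) (map_one _)]
      have c1 : (starRingEnd ℂ) (2 * Complex.I * s / ((starRingEnd ℂ) lam - Complex.I * s))
          = -(2 * Complex.I * s / (lam + Complex.I * s)) := by
        rw [map_div₀]
        simp only [_root_.map_mul, map_sub, map_ofNat, Complex.conj_I, Complex.conj_ofReal,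
          Complex.conj_conj]
        rw [show lam - (-Complex.I) * (s : ℂ) = lam + Complex.I * s by ring]; ring
      have c2 : (starRingEnd ℂ) (2 * Complex.I * s / ((starRingEnd ℂ) lam + Complex.I * s))
          = -(2 * Complex.I * s / (lam - Complex.I * s)) := by
        rw [map_div₀]
        simp only [_root_.map_mul, map_add, map_ofNat, Complex.conj_I, Complex.conj_ofReal,
          Complex.conj_conj]
        rw [show lam + (-Complex.I) * (s : ℂ) = lam - Complex.I * s by ring]; ring
      rw [c1, c2, phi, ← hq]
      · module
      all_goals intro a b; simp
    · have hJJ : Jmat n * Jmat n = 1 := by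
        rw [Jmat, Matrix.diagonal_mul_diagonal]
        convert Matrix.diagonal_one with i
        split <;> norm_num
      have hJinv : (Jmat n)⁻¹ = Jmat n := Matrix.inv_eq_right_inv hJJ
      rw [hJinv] at hre ⊢
      have hJp : Jmat n * p * Jmat n = q := hre.symm
      have hJq : Jmat n * q * Jmat n = p := by
        rw [← hJp]
        have : Jmat n * (Jmat n * p * Jmat n) * Jmat n
            = Jmat n * Jmat n * p * (Jmat n * Jmat n) := by noncomm_ring
        rw [this, hJJ, one_mul, mul_one]
      rw [phi, phi, ← hq]
      simp only [mul_add, mul_sub, add_mul, sub_mul, mul_one, one_mul, Matrix.smul_mul,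
        Matrix.mul_smul]
      rw [hJJ, hJp, hJq]
      match_scalars <;> field_simp <;> ring
  · -- (d) limit
    intro i j
    have hinv : ∀ c : ℂ, Tendsto (fun z : ℂ => (z - c)⁻¹) (cocompact ℂ) (nhds 0) := by
      intro c
      have h1 : Tendsto (fun z : ℂ => z - c) (cocompact ℂ) (cocompact ℂ) :=
        (Homeomorph.subRight c).map_cocompact.le
      have h2 : Tendsto (Inv.inv : ℂ → ℂ) (cocompact ℂ) (nhds 0) := by
        rw [← Metric.cobounded_eq_cocompact]; exact tendsto_inv₀_cobounded
      exact h2.comp h1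
    have ha : Tendsto (fun lam : ℂ => 2 * Complex.I * s / (lam - Complex.I * s) * p i j)
        (cocompact ℂ) (nhds 0) := by
      have := ((hinv (Complex.I * s)).const_mul (2 * Complex.I * (s : ℂ))).mul_const (p i j)
      simpa [div_eq_mul_inv] using this
    have hb : Tendsto (fun lam : ℂ => 2 * Complex.I * s / (lam + Complex.I * s) * q i j)
        (cocompact ℂ) (nhds 0) := by
      have := ((hinv (-(Complex.I * s))).const_mul (2 * Complex.I * (s : ℂ))).mul_const (q i j)
      simpa [div_eq_mul_inv, sub_neg_eq_add] using this
    have hc : Tendsto (fun _ : ℂ => (1 : Matrix (Fin (n + 1)) (Fin (n + 1)) ℂ) i j)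
        (cocompact ℂ) (nhds ((1 : Matrix (Fin (n + 1)) (Fin (n + 1)) ℂ) i j)) :=
      tendsto_const_nhds
    have h := (hc.add ha).sub hb
    simp only [add_zero, sub_zero] at h
    refine h.congr fun lam => ?_
    simp [phi, ← hq, Matrix.sub_apply, Matrix.add_apply, Matrix.smul_apply, smul_eq_mul]
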